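/- arXiv:0710.2080 — 2 statements merged into one kernel-verified Lean document; each statement's English description precedes it below -/
import Mathlib

section
/- Let (V, ⟨·,·⟩, A) be a Jacobi–Ricci commuting model whose Ricci operator ρ is complex diagonalizable with spectrum of the complexification equal to {a₁ + a₂·i, a₁ − a₂·i} where a₂ > 0. Set J := a₂⁻¹·(ρ − a₁·id). Then: J is self-adjoint, i.e. ⟨Jx, y⟩ = ⟨x, Jy⟩ for all x, y; J² = −id; ρ = a₁·id + a₂·J; and A(Jx,y,z,w) = A(x,Jy,z,w) = A(x,y,Jz,w) = A(x,y,z,Jw) for all x, y, z, w ∈ V. -/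
/-!
Since the complexification of `ρ` is diagonalizable with eigenvalues `λ = a₁ + a₂ i` and `λ̄`,
it is annihilated by `(X - λ)(X - λ̄)`. That operator is the complexification of the real operator
`(ρ - a₁)² + a₂²`, and complexification is injective, so `(ρ - a₁)² = -a₂²`, i.e. `J² = -1`.
The Ricci operator is self-adjoint because its defining trace is symmetric in `x` and `y`, and
both self-adjointness and the Jacobi–Ricci commuting identities pass from `ρ` to any
`c • (ρ - d • id)`, in particular to `J`.
-/

open TensorProduct

/-- `f : W⁴ → ℝ` is multilinear over `ℝ` in each of its four slots. -/
def IsML {W : Type*} [AddCommGroup W] [Module ℝ W] (f : W → W → W → W → ℝ) : Prop :=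
  (∀ x x' y z w, f (x + x') y z w = f x y z w + f x' y z w) ∧
  (∀ (c : ℝ) x y z w, f (c • x) y z w = c * f x y z w) ∧
  (∀ x y y' z w, f x (y + y') z w = f x y z w + f x y' z w) ∧
  (∀ (c : ℝ) x y z w, f x (c • y) z w = c * f x y z w) ∧
  (∀ x y z z' w, f x y (z + z') w = f x y z w + f x y z' w) ∧
  (∀ (c : ℝ) x y z w, f x y (c • z) w = c * f x y z w) ∧
  (∀ x y z w w', f x y z (w + w') = f x y z w + f x y z w') ∧
  (∀ (c : ℝ) x y z w, f x y z (c • w) = c * f x y z w)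

/-- The symmetries of the Riemann curvature tensor. -/
def IsCurvSym {W : Type*} [AddCommGroup W] [Module ℝ W] (f : W → W → W → W → ℝ) : Prop :=
  (∀ x y z w, f x y z w = - f y x z w) ∧
  (∀ x y z w, f x y z w = f z w x y) ∧
  (∀ x y z w, f x y z w + f y z x w + f z x y w = 0)

/-- An algebraic curvature tensor: a multilinear map with the curvature symmetries. -/
def IsACT {W : Type*} [AddCommGroup W] [Module ℝ W] (f : W → W → W → W → ℝ) : Prop :=
  IsML f ∧ IsCurvSym f

/-- The defining value of `⟨ρ x, y⟩`: the trace of `z ↦ ½𝓡(z,x)y + ½𝓡(z,y)x`,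
where `R` is the (curried) curvature operator. -/
noncomputable def ricciForm {V : Type*} [AddCommGroup V] [Module ℝ V]
    (R : V →ₗ[ℝ] V →ₗ[ℝ] V →ₗ[ℝ] V) (x y : V) : ℝ :=
  LinearMap.trace ℝ V
    (((1 : ℝ) / 2) • ((R.flip x).flip y) + ((1 : ℝ) / 2) • ((R.flip y).flip x))

/-- The Jacobi--Ricci commuting identity of Lemma 1 (3). -/
def JRComm {V : Type*} [AddCommGroup V] [Module ℝ V]
    (A : V → V → V → V → ℝ) (ρ : V →ₗ[ℝ] V) : Prop :=
  ∀ v₁ v₂ v₃ v₄ : V,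
    A (ρ v₁) v₂ v₃ v₄ = A v₁ (ρ v₂) v₃ v₄ ∧
    A v₁ (ρ v₂) v₃ v₄ = A v₁ v₂ (ρ v₃) v₄ ∧
    A v₁ v₂ (ρ v₃) v₄ = A v₁ v₂ v₃ (ρ v₄)

/-- `f` is complex diagonalizable: the complexification of `f` acting on `ℂ ⊗ V` is
diagonalizable, i.e. the eigenspaces of the complexified operator span. -/
def IsCDiagonalizable {V : Type*} [AddCommGroup V] [Module ℝ V] (f : V →ₗ[ℝ] V) : Prop :=
  (⨆ μ : ℂ, Module.End.eigenspace (LinearMap.baseChange ℂ f) μ) = ⊤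


open Module End in
theorem Module.End.sub_smul_one_mul_sub_smul_one_eq_zero_of_iSup_eigenspace_eq_top
    {K M : Type*} [Field K] [AddCommGroup M] [Module K M] {f : End K M} (a b : K)
    (hf : (⨆ μ, f.eigenspace μ) = ⊤) (hab : ∀ μ, f.HasEigenvalue μ → μ = a ∨ μ = b) :
    (f - a • 1) * (f - b • 1) = 0 := by
  rw [← LinearMap.ker_eq_top, eq_top_iff, ← hf]
  refine iSup_le fun μ => ?_
  intro v hv
  by_cases hμ : f.HasEigenvalue μ
  · have hfv : f v = μ • v := mem_eigenspace_iff.mp hv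
    have hv' : ((f - a • 1) * (f - b • 1)) v = ((μ - a) * (μ - b)) • v := by
      simp only [mul_apply, LinearMap.sub_apply, LinearMap.smul_apply, one_apply, map_sub,
        map_smul, hfv]
      module
    rcases hab μ hμ with rfl | rfl <;> simp [hv']
  · rw [hasEigenvalue_iff, not_not] at hμ
    rw [hμ, Submodule.mem_bot] at hv
    simp [hv]

open Complex in
theorem LinearMap.baseChange_sub_mul_sub_conj {V : Type*} [AddCommGroup V] [Module ℝ V]
    (ρ : Module.End ℝ V) (a b : ℝ) :
    (ρ.baseChange ℂ - (a + b * I) • 1) * (ρ.baseChange ℂ - (a - b * I) • 1) =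
      ((ρ - a • 1) ^ 2 + b ^ 2 • 1).baseChange ℂ := by
  change _ = Module.End.baseChangeHom ℝ ℂ V _
  simp only [map_add, map_pow, map_sub, map_smul, map_one]
  change _ = (ρ.baseChange ℂ - _) ^ 2 + _
  simp only [sq, sub_mul, mul_sub, mul_one, one_mul, mul_smul_comm, smul_mul_assoc]
  linear_combination (norm := module) (-(b : ℂ) ^ 2 * I_sq) • (1 : Module.End ℂ (ℂ ⊗[ℝ] V))

open Complex in
theorem IsCDiagonalizable.sub_smul_one_sq_eq_of_spectrum_eq_pair {V : Type*} [AddCommGroup V]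
    [Module ℝ V] {ρ : Module.End ℝ V} (hdiag : IsCDiagonalizable ρ) (a b : ℝ)
    (hspec : spectrum ℂ (ρ.baseChange ℂ) = {(a : ℂ) + b * I, (a : ℂ) - b * I}) :
    (ρ - a • 1) ^ 2 = -(b ^ 2 • 1) := by
  have hzero :=
    Module.End.sub_smul_one_mul_sub_smul_one_eq_zero_of_iSup_eigenspace_eq_top _ _ hdiag
      fun μ hμ => by simpa [hspec] using hμ.mem_spectrum
  rw [LinearMap.baseChange_sub_mul_sub_conj, ← LinearMap.baseChange_zero] at hzero
  exact eq_neg_of_add_eq_zero_left (LinearMap.baseChangeHom_injective ℝ V ℂ hzero)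

theorem Module.End.smul_sub_smul_one_sq_eq_neg_one {K M : Type*} [Field K] [AddCommGroup M]
    [Module K M] {f : Module.End K M} {a b : K} (hb : b ≠ 0)
    (hf : (f - a • 1) ^ 2 = -(b ^ 2 • 1)) :
    (b⁻¹ • (f - a • 1)) ^ 2 = -1 := by
  rw [smul_pow, hf, smul_neg, smul_smul, inv_pow, inv_mul_cancel₀ (pow_ne_zero 2 hb), one_smul]

theorem ricciForm_comm {V : Type*} [AddCommGroup V] [Module ℝ V]
    (R : V →ₗ[ℝ] V →ₗ[ℝ] V →ₗ[ℝ] V) (x y : V) : ricciForm R x y = ricciForm R y x := by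
  rw [ricciForm, ricciForm, add_comm]

theorem JRComm.smul_sub_smul_id {V : Type*} [AddCommGroup V] [Module ℝ V]
    {A : V → V → V → V → ℝ} {ρ : V →ₗ[ℝ] V} (hA : IsML A) (h : JRComm A ρ) (c d : ℝ) :
    JRComm A (c • (ρ - d • LinearMap.id)) := by
  obtain ⟨add₁, smul₁, add₂, smul₂, add₃, smul₃, add₄, smul₄⟩ := hA
  intro x y z w
  obtain ⟨h₁₂, h₂₃, h₃₄⟩ := h x y z w
  have hexp : ∀ v, (c • (ρ - d • LinearMap.id) : V →ₗ[ℝ] V) v = c • (ρ v + (-d) • v) :=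
    fun v => by
      rw [LinearMap.smul_apply, LinearMap.sub_apply, LinearMap.smul_apply, LinearMap.id_apply,
        neg_smul, sub_eq_add_neg]
  simp only [hexp, add₁, smul₁, add₂, smul₂, add₃, smul₃, add₄, smul₄, h₁₂, h₂₃, h₃₄, and_self]

theorem isAdjointPair_self_of_eq_ricciForm {V : Type*} [AddCommGroup V] [Module ℝ V]
    {B : LinearMap.BilinForm ℝ V} (hBsymm : ∀ x y, B x y = B y x)
    {R : V →ₗ[ℝ] V →ₗ[ℝ] V →ₗ[ℝ] V} {ρ : V →ₗ[ℝ] V}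
    (hρ : ∀ x y, B (ρ x) y = ricciForm R x y) :
    LinearMap.IsAdjointPair B B ρ ρ := fun x y => by
  rw [hρ, ricciForm_comm, ← hρ, hBsymm]

theorem statement4_general
    {V : Type*} [AddCommGroup V] [Module ℝ V]
    (B : LinearMap.BilinForm ℝ V)
    (hBsymm : ∀ x y, B x y = B y x)
    (A : V → V → V → V → ℝ) (hA : IsACT A)
    (R : V →ₗ[ℝ] V →ₗ[ℝ] V →ₗ[ℝ] V)
    (ρ : V →ₗ[ℝ] V)
    (hρ : ∀ x y, B (ρ x) y = ricciForm R x y)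
    (hJR : JRComm A ρ)
    (hdiag : IsCDiagonalizable ρ)
    (a₁ a₂ : ℝ) (ha₂ : 0 < a₂)
    (hspec : spectrum ℂ (LinearMap.baseChange ℂ ρ) =
      {(a₁ : ℂ) + (a₂ : ℂ) * Complex.I, (a₁ : ℂ) - (a₂ : ℂ) * Complex.I})
    (J : V →ₗ[ℝ] V) (hJ : J = a₂⁻¹ • (ρ - a₁ • LinearMap.id)) :
    (∀ x y, B (J x) y = B x (J y)) ∧
    (J ∘ₗ J = - LinearMap.id) ∧
    (ρ = a₁ • LinearMap.id + a₂ • J) ∧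
    (∀ x y z w : V,
      A (J x) y z w = A x (J y) z w ∧
      A x (J y) z w = A x y (J z) w ∧
      A x y (J z) w = A x y z (J w)) := by
  subst hJ
  refine ⟨?_, ?_, ?_, hJR.smul_sub_smul_id hA.1 _ _⟩
  · exact ((isAdjointPair_self_of_eq_ricciForm hBsymm hρ).sub
      (LinearMap.isAdjointPair_id.smul a₁)).smul a₂⁻¹
  · rw [← Module.End.mul_eq_comp, ← sq, ← Module.End.one_eq_id]
    exact Module.End.smul_sub_smul_one_sq_eq_neg_one ha₂.ne'
      (hdiag.sub_smul_one_sq_eq_of_spectrum_eq_pair a₁ a₂ hspec)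
  · rw [smul_smul, mul_inv_cancel₀ ha₂.ne', one_smul, add_sub_cancel]

theorem statement4
    {V : Type*} [AddCommGroup V] [Module ℝ V] [FiniteDimensional ℝ V]
    (B : LinearMap.BilinForm ℝ V)
    (hBsymm : ∀ x y, B x y = B y x)
    (hBnondeg : ∀ x, (∀ y, B x y = 0) → x = 0)
    (A : V → V → V → V → ℝ) (hA : IsACT A)
    (R : V →ₗ[ℝ] V →ₗ[ℝ] V →ₗ[ℝ] V)
    (hR : ∀ x y z w, B (R x y z) w = A x y z w)
    (ρ : V →ₗ[ℝ] V)
    (hρ : ∀ x y, B (ρ x) y = ricciForm R x y)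
    (hJR : JRComm A ρ)
    (hdiag : IsCDiagonalizable ρ)
    (a₁ a₂ : ℝ) (ha₂ : 0 < a₂)
    (hspec : spectrum ℂ (LinearMap.baseChange ℂ ρ) =
      {(a₁ : ℂ) + (a₂ : ℂ) * Complex.I, (a₁ : ℂ) - (a₂ : ℂ) * Complex.I})
    (J : V →ₗ[ℝ] V) (hJ : J = a₂⁻¹ • (ρ - a₁ • LinearMap.id)) :
    (∀ x y, B (J x) y = B x (J y)) ∧
    (J ∘ₗ J = - LinearMap.id) ∧
    (ρ = a₁ • LinearMap.id + a₂ • J) ∧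
    (∀ x y z w : V,
      A (J x) y z w = A x (J y) z w ∧
      A x (J y) z w = A x y (J z) w ∧
      A x y (J z) w = A x y z (J w)) :=
  statement4_general B hBsymm A hA R ρ hρ hJR hdiag a₁ a₂ ha₂ hspec J hJ
end

section
/- Let (V₀, g) be a finite-dimensional positive definite real inner product space with V₀ ≠ 0 and let A₁, A₂ be algebraic curvature tensors on V₀ which are Einstein with Einstein constants a₁ and a₂ > 0 respectively. Then the model M(V₀,g,A₁,A₂) is Jacobi–Ricci commuting and is not Einstein; its Ricci operator ρ is complex diagonalizable with spectrum of the complexification equal to {2a₁ + 2a₂·i, 2a₁ − 2a₂·i}; and the associated complex structure J := (2a₂)⁻¹·(ρ − 2a₁·id) is multiplication by i, i.e. J(x⁺, x⁻) = (−x⁻, x⁺). -/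
/-!
Reading `V₀ × V₀` as `V₀ ⊗ ℂ`, the tensor `A` is the real part of the complex-multilinear
`(A₁ + i A₂)^ℂ`. Contracting over a `g`-orthonormal basis (on which `⟨·,·⟩` is `+g` on the first
factor and `-g` on the second) and using the Einstein conditions gives `ρ = 2a₁ + 2a₂ J`, where
`J` is multiplication by `i`. As `J` acts as `i` in every slot of `(A₁ + i A₂)^ℂ`, `ρ` acts in
every slot as multiplication by `2a₁ + 2a₂ i`, which is the Jacobi–Ricci identity. Since
`J² = -1`, after complexification `1 ⊗ v ∓ i ⊗ J v` are eigenvectors of `ρ` for `2a₁ ± 2a₂ i`;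
they span, and eigenspaces for distinct eigenvalues are independent, which gives the spectrum.
-/

open TensorProduct

/-- The ℂ-valued tensor `A₁ + i·A₂`. -/
noncomputable def acx {W : Type*} [AddCommGroup W] [Module ℝ W]
    (A₁ A₂ : W → W → W → W → ℝ) (x y z w : W) : ℂ :=
  (A₁ x y z w : ℂ) + Complex.I * (A₂ x y z w : ℂ)

/-- The complex multilinear extension `(A₁ + i·A₂)^ℂ` of `A₁ + i·A₂` to the
complexification of `W`, where `W × W` is identified with `W ⊗ ℂ` via
`(x⁺, x⁻) ↔ x⁺ + i·x⁻`. -/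
noncomputable def acExt {W : Type*} [AddCommGroup W] [Module ℝ W]
    (A₁ A₂ : W → W → W → W → ℝ) (p q r s : W × W) : ℂ :=
  acx A₁ A₂ p.1 q.1 r.1 s.1
  + Complex.I * (acx A₁ A₂ p.2 q.1 r.1 s.1 + acx A₁ A₂ p.1 q.2 r.1 s.1
      + acx A₁ A₂ p.1 q.1 r.2 s.1 + acx A₁ A₂ p.1 q.1 r.1 s.2)
  - (acx A₁ A₂ p.2 q.2 r.1 s.1 + acx A₁ A₂ p.2 q.1 r.2 s.1 + acx A₁ A₂ p.2 q.1 r.1 s.2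
      + acx A₁ A₂ p.1 q.2 r.2 s.1 + acx A₁ A₂ p.1 q.2 r.1 s.2 + acx A₁ A₂ p.1 q.1 r.2 s.2)
  - Complex.I * (acx A₁ A₂ p.2 q.2 r.2 s.1 + acx A₁ A₂ p.2 q.2 r.1 s.2
      + acx A₁ A₂ p.2 q.1 r.2 s.2 + acx A₁ A₂ p.1 q.2 r.2 s.2)
  + acx A₁ A₂ p.2 q.2 r.2 s.2

/-- The curvature tensor `A := Re((A₁ + i·A₂)^ℂ)` of the model `M(V₀,g,A₁,A₂)`. -/
noncomputable def modelA {W : Type*} [AddCommGroup W] [Module ℝ W]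
    (A₁ A₂ : W → W → W → W → ℝ) (p q r s : W × W) : ℝ :=
  (acExt A₁ A₂ p q r s).re

/-- The inner product `⟨(x⁺,x⁻),(y⁺,y⁻)⟩ = g(x⁺,y⁺) − g(x⁻,y⁻)` of the model
`M(V₀,g,A₁,A₂)`. -/
def modelB {W : Type*} [AddCommGroup W] [Module ℝ W]
    (g : LinearMap.BilinForm ℝ W) (p q : W × W) : ℝ :=
  g p.1 q.1 - g p.2 q.2

/-- `f` is Einstein with Einstein constant `a` on the positive definite inner product
space `(W, g)`: for every `g`-orthonormal basis `{e_k}` one has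
`Σ_k f(x, e_k, e_k, y) = a·g(x,y)`. -/
def IsEinsteinWith {W : Type*} [AddCommGroup W] [Module ℝ W]
    (g : LinearMap.BilinForm ℝ W) (f : W → W → W → W → ℝ) (a : ℝ) : Prop :=
  ∀ (n : ℕ) (b : Module.Basis (Fin n) ℝ W),
    (∀ i j, g (b i) (b j) = if i = j then 1 else 0) →
    ∀ x y, (∑ k, f x (b k) (b k) y) = a * g x y

section Multilinear

variable {W : Type*} [AddCommGroup W] [Module ℝ W] {f : W → W → W → W → ℝ}

lemma IsML.zero_left (h : IsML f) (y z w : W) : f 0 y z w = 0 := by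
  simpa using h.2.1 0 0 y z w

lemma IsML.zero_right (h : IsML f) (x y z : W) : f x y z 0 = 0 := by
  simpa using h.2.2.2.2.2.2.2 0 x y z 0

lemma IsML.neg_left (h : IsML f) (x y z w : W) : f (-x) y z w = -f x y z w := by
  simpa using h.2.1 (-1) x y z w

end Multilinear

/-- Multiplication by `i` on `W × W ≅ W ⊗ ℂ`. -/
def prodJ (W : Type*) [AddCommGroup W] [Module ℝ W] : (W × W) →ₗ[ℝ] (W × W) :=
  (-LinearMap.snd ℝ W W).prod (LinearMap.fst ℝ W W)

section Model

variable {W : Type*} [AddCommGroup W] [Module ℝ W] {A₁ A₂ : W → W → W → W → ℝ}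

@[simp] lemma prodJ_apply (p : W × W) : prodJ W p = (-p.2, p.1) := rfl

lemma prodJ_prodJ (p : W × W) : prodJ W (prodJ W p) = -p := rfl

open Complex

lemma acExt_add_smul_prodJ_left (h₁ : IsML A₁) (h₂ : IsML A₂) (c d : ℝ) (p q r s : W × W) :
    acExt A₁ A₂ (c • p + d • prodJ W p) q r s = (c + d * I) * acExt A₁ A₂ p q r s := by
  simp only [acExt, acx, prodJ_apply, Prod.fst_add, Prod.snd_add, Prod.smul_fst, Prod.smul_snd,
    h₁.1, h₁.2.1, h₁.neg_left, h₂.1, h₂.2.1, h₂.neg_left, smul_neg]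
  push_cast
  ring_nf
  simp only [I_sq, I_pow_three]
  ring

lemma acExt_antisymm (h₁ : IsCurvSym A₁) (h₂ : IsCurvSym A₂) (p q r s : W × W) :
    acExt A₁ A₂ p q r s = -acExt A₁ A₂ q p r s := by
  simp only [acExt, acx, h₁.1 p.1 q.1, h₁.1 p.1 q.2, h₁.1 p.2 q.1, h₁.1 p.2 q.2,
    h₂.1 p.1 q.1, h₂.1 p.1 q.2, h₂.1 p.2 q.1, h₂.1 p.2 q.2]
  push_cast
  ring

lemma acExt_pair_comm (h₁ : IsCurvSym A₁) (h₂ : IsCurvSym A₂) (p q r s : W × W) :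
    acExt A₁ A₂ r s p q = acExt A₁ A₂ p q r s := by
  simp only [acExt, acx, h₁.2.1 r.1 s.1, h₁.2.1 r.1 s.2, h₁.2.1 r.2 s.1, h₁.2.1 r.2 s.2,
    h₂.2.1 r.1 s.1, h₂.2.1 r.1 s.2, h₂.2.1 r.2 s.1, h₂.2.1 r.2 s.2]
  ring

/-- `c + d J` acts in the first slot of `(A₁ + i A₂)^ℂ` as multiplication by `c + d i` (complex
multilinearity); the curvature symmetries carry this to the other three slots. -/
lemma jrComm_modelA (hA₁ : IsACT A₁) (hA₂ : IsACT A₂) (c d : ℝ) :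
    JRComm (modelA A₁ A₂) (c • LinearMap.id + d • prodJ W) := by
  set T := c • LinearMap.id + d • prodJ W
  have slot₁ : ∀ p q r s, acExt A₁ A₂ (T p) q r s = (c + d * I) * acExt A₁ A₂ p q r s :=
    acExt_add_smul_prodJ_left hA₁.1 hA₂.1 c d
  have slot₂ : ∀ p q r s, acExt A₁ A₂ p (T q) r s = (c + d * I) * acExt A₁ A₂ p q r s :=
    fun p q r s => by
      rw [acExt_antisymm hA₁.2 hA₂.2 p, slot₁, acExt_antisymm hA₁.2 hA₂.2 q]
      ring
  have slot₃ : ∀ p q r s, acExt A₁ A₂ p q (T r) s = (c + d * I) * acExt A₁ A₂ p q r s :=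
    fun p q r s => by
      rw [← acExt_pair_comm hA₁.2 hA₂.2 p q, slot₁, acExt_pair_comm hA₁.2 hA₂.2]
  have slot₄ : ∀ p q r s, acExt A₁ A₂ p q r (T s) = (c + d * I) * acExt A₁ A₂ p q r s :=
    fun p q r s => by
      rw [← acExt_pair_comm hA₁.2 hA₂.2 p q, slot₂, acExt_pair_comm hA₁.2 hA₂.2]
  intro v₁ v₂ v₃ v₄
  simp only [modelA, slot₁, slot₂, slot₃, slot₄, and_self]

lemma modelA_inl_inl (h₁ : IsML A₁) (h₂ : IsML A₂) (e : W) (p q : W × W) :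
    modelA A₁ A₂ (e, 0) p q (e, 0) =
      A₁ e p.1 q.1 e - A₂ e p.2 q.1 e - A₂ e p.1 q.2 e - A₁ e p.2 q.2 e := by
  simp only [modelA, acExt, acx, h₁.zero_left, h₂.zero_left, h₁.zero_right, h₂.zero_right,
    ofReal_zero, mul_zero, add_zero, add_re, sub_re, mul_re, add_im, mul_im, I_re, I_im,
    ofReal_re, ofReal_im, zero_re, zero_im]
  ring

lemma modelA_inr_inr (h₁ : IsML A₁) (h₂ : IsML A₂) (e : W) (p q : W × W) :
    modelA A₁ A₂ (0, e) p q (0, e) =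
      -(A₁ e p.1 q.1 e - A₂ e p.2 q.1 e - A₂ e p.1 q.2 e - A₁ e p.2 q.2 e) := by
  simp only [modelA, acExt, acx, h₁.zero_left, h₂.zero_left, h₁.zero_right, h₂.zero_right,
    ofReal_zero, mul_zero, add_zero, add_re, sub_re, mul_re, add_im, mul_im, I_re, I_im,
    ofReal_re, ofReal_im, zero_re, zero_im]
  ring

end Model

section OrthonormalBasis

variable {V : Type*} [AddCommGroup V] [Module ℝ V] {g : LinearMap.BilinForm ℝ V}

lemma exists_basis_orthonormal [FiniteDimensional ℝ V] (hgsymm : ∀ x y, g x y = g y x)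
    (hgpos : ∀ x : V, x ≠ 0 → 0 < g x x) :
    ∃ b : Module.Basis (Fin (Module.finrank ℝ V)) ℝ V,
      ∀ i j, g (b i) (b j) = if i = j then 1 else 0 := by
  let core : InnerProductSpace.Core ℝ V :=
    { inner := fun x y => g x y
      conj_inner_symm := fun x y => by simpa using hgsymm y x
      re_inner_nonneg := fun x => by
        rcases eq_or_ne x 0 with rfl | hx
        · simp
        · simpa using (hgpos x hx).le
      definite := fun x hx => by_contra fun h => (hgpos x h).ne' (by simpa using hx)
      add_left := fun x y z => by simp
      smul_left := fun x y r => by simp }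
  let : NormedAddCommGroup V := core.toNormedAddCommGroup
  let : InnerProductSpace ℝ V := InnerProductSpace.ofCore core.toCore
  refine ⟨(stdOrthonormalBasis ℝ V).toBasis, fun i j => ?_⟩
  rw [OrthonormalBasis.coe_toBasis]
  exact orthonormal_iff_ite.mp (stdOrthonormalBasis ℝ V).orthonormal i j

lemma eq_of_forall_modelB_eq (hgpos : ∀ x : V, x ≠ 0 → 0 < g x x) {u v : V × V}
    (h : ∀ q, modelB g u q = modelB g v q) : u = v := by
  have hzero : ∀ q, modelB g (u - v) q = 0 := fun q => by
    have := h q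
    simp only [modelB, Prod.fst_sub, Prod.snd_sub, map_sub, LinearMap.sub_apply] at this ⊢
    linarith
  obtain ⟨d, hd⟩ : ∃ d, u - v = d := ⟨_, rfl⟩
  have hsq : g d.1 d.1 + g d.2 d.2 = 0 := by
    simpa [modelB, hd] using hzero (d.1, -d.2)
  have hnonneg : ∀ x : V, 0 ≤ g x x := fun x => by
    rcases eq_or_ne x 0 with rfl | hx
    · simp
    · exact (hgpos x hx).le
  have h₁ : d.1 = 0 := by_contra fun hne => by linarith [hgpos _ hne, hnonneg d.2]
  have h₂ : d.2 = 0 := by_contra fun hne => by linarith [hgpos _ hne, hnonneg d.1]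
  exact sub_eq_zero.mp (hd.trans (Prod.ext h₁ h₂))

variable {n : ℕ} {b : Module.Basis (Fin n) ℝ V}
  (hb : ∀ i j, g (b i) (b j) = if i = j then 1 else 0)
include hb

lemma repr_eq_of_orthonormal (x : V) (k : Fin n) : b.repr x k = g x (b k) := by
  have : (b.coord k : V →ₗ[ℝ] ℝ) = g.flip (b k) :=
    b.ext fun i => by simp [hb i k, Finsupp.single_apply]
  simpa using LinearMap.congr_fun this x

lemma trace_prod_eq_sum_modelB (T : (V × V) →ₗ[ℝ] (V × V)) :
    LinearMap.trace ℝ (V × V) T =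
      ∑ k, modelB g (T (b k, 0)) (b k, 0) - ∑ k, modelB g (T (0, b k)) (0, b k) := by
  rw [LinearMap.trace_eq_matrix_trace ℝ (b.prod b), Matrix.trace, Fintype.sum_sum_type,
    sub_eq_add_neg, ← Finset.sum_neg_distrib]
  congr 1 <;> refine Finset.sum_congr rfl fun k _ => ?_ <;>
    simp [LinearMap.toMatrix_apply, repr_eq_of_orthonormal hb, modelB]

lemma IsEinsteinWith.sum_apply_basis {A : V → V → V → V → ℝ} {a : ℝ} (hA : IsCurvSym A)
    (hE : IsEinsteinWith g A a) (hgsymm : ∀ x y, g x y = g y x) (x y : V) :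
    ∑ k, A (b k) x y (b k) = a * g x y := by
  simp only [fun k => hA.2.1 (b k) x y (b k)]
  rw [hE n b hb y x, hgsymm]

end OrthonormalBasis

section Ricci

variable {W : Type*} [AddCommGroup W] [Module ℝ W] [FiniteDimensional ℝ W]
  {g : LinearMap.BilinForm ℝ W} {A₁ A₂ : W → W → W → W → ℝ} {a₁ a₂ : ℝ}
  {R : (W × W) →ₗ[ℝ] (W × W) →ₗ[ℝ] (W × W) →ₗ[ℝ] (W × W)}
  (hgsymm : ∀ x y, g x y = g y x) (hgpos : ∀ x : W, x ≠ 0 → 0 < g x x)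
  (hA₁ : IsACT A₁) (hA₂ : IsACT A₂) (hE₁ : IsEinsteinWith g A₁ a₁)
  (hE₂ : IsEinsteinWith g A₂ a₂) (hR : ∀ p q r s, modelB g (R p q r) s = modelA A₁ A₂ p q r s)
include hgsymm hgpos hA₁ hA₂ hE₁ hE₂ hR

lemma trace_curvature_eq (u v : W × W) :
    LinearMap.trace ℝ (W × W) ((R.flip u).flip v) =
      modelB g ((2 * a₁) • u + (2 * a₂) • prodJ W u) v := by
  obtain ⟨b, hb⟩ := exists_basis_orthonormal hgsymm hgpos
  rw [trace_prod_eq_sum_modelB hb]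
  simp only [LinearMap.flip_apply, hR, modelA_inl_inl hA₁.1 hA₂.1, modelA_inr_inr hA₁.1 hA₂.1,
    Finset.sum_neg_distrib, sub_neg_eq_add, Finset.sum_sub_distrib,
    hE₁.sum_apply_basis hb hA₁.2 hgsymm, hE₂.sum_apply_basis hb hA₂.2 hgsymm]
  simp only [modelB, prodJ_apply, Prod.fst_add, Prod.snd_add, Prod.smul_fst, Prod.smul_snd,
    map_add, map_smul, map_neg, LinearMap.add_apply, LinearMap.smul_apply, LinearMap.neg_apply,
    smul_eq_mul]
  ring

lemma ricciForm_eq (p q : W × W) :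
    ricciForm R p q = modelB g ((2 * a₁) • p + (2 * a₂) • prodJ W p) q := by
  rw [ricciForm, map_add, map_smul, map_smul,
    trace_curvature_eq hgsymm hgpos hA₁ hA₂ hE₁ hE₂ hR,
    trace_curvature_eq hgsymm hgpos hA₁ hA₂ hE₁ hE₂ hR]
  simp only [modelB, prodJ_apply, Prod.fst_add, Prod.snd_add, Prod.smul_fst, Prod.smul_snd,
    map_add, map_smul, map_neg, LinearMap.add_apply, LinearMap.smul_apply, LinearMap.neg_apply,
    smul_eq_mul, hgsymm q.1, hgsymm q.2]
  ring

lemma ricciOperator_eq {ρ : (W × W) →ₗ[ℝ] (W × W)}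
    (hρ : ∀ p q, modelB g (ρ p) q = ricciForm R p q) :
    ρ = (2 * a₁) • LinearMap.id + (2 * a₂) • prodJ W :=
  LinearMap.ext fun p => eq_of_forall_modelB_eq hgpos fun q =>
    (hρ p q).trans (ricciForm_eq hgsymm hgpos hA₁ hA₂ hE₁ hE₂ hR p q)

end Ricci

namespace Module.End

variable {K M : Type*} [Field K] [AddCommGroup M] [Module K M]

theorem spectrum_subset_of_eigenspace_sup_eq_top [FiniteDimensional K M] {f : End K M}
    {μ ν : K} (h : f.eigenspace μ ⊔ f.eigenspace ν = ⊤) : spectrum K f ⊆ {μ, ν} := by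
  intro ξ hξ
  by_contra hne
  simp only [Set.mem_insert_iff, Set.mem_singleton_iff, not_or] at hne
  have hdisj := iSupIndep_def.mp f.eigenspaces_iSupIndep ξ
  have hle : f.eigenspace μ ⊔ f.eigenspace ν ≤ ⨆ (j) (_ : j ≠ ξ), f.eigenspace j :=
    sup_le (le_biSup f.eigenspace (Ne.symm hne.1)) (le_biSup f.eigenspace (Ne.symm hne.2))
  rw [h, top_le_iff] at hle
  rw [hle, disjoint_top] at hdisj
  exact (hasEigenvalue_iff_mem_spectrum.mpr hξ) hdisj

end Module.End

section Complexification

variable {V : Type*} [AddCommGroup V] [Module ℝ V]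

open Complex

lemma one_tmul_add_I_tmul_ne_zero {v : V} (hv : v ≠ 0) (w : V) :
    (1 : ℂ) ⊗ₜ[ℝ] v + I ⊗ₜ[ℝ] w ≠ 0 := fun h =>
  hv (by simpa using congrArg (TensorProduct.lift ((LinearMap.lsmul ℝ V).comp reLm)) h)

variable {J : V →ₗ[ℝ] V} (hJ : ∀ v, J (J v) = -v)
include hJ

lemma one_tmul_sub_I_tmul_mem_eigenspace (a b : ℝ) (v : V) :
    (1 : ℂ) ⊗ₜ[ℝ] v - I ⊗ₜ[ℝ] J v ∈
      Module.End.eigenspace ((a • LinearMap.id + b • J).baseChange ℂ) ((a : ℂ) + b * I) := by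
  rw [Module.End.mem_eigenspace_iff]
  have hsmul : ∀ (r : ℝ) (w : ℂ ⊗[ℝ] V), r • w = (r : ℂ) • w :=
    fun r w => (algebraMap_smul ℂ r w).symm
  have hI : ∀ w : V, I ⊗ₜ[ℝ] w = I • ((1 : ℂ) ⊗ₜ[ℝ] w) := fun w => by
    rw [smul_tmul', smul_eq_mul, mul_one]
  simp only [map_sub, LinearMap.baseChange_tmul, LinearMap.add_apply, LinearMap.smul_apply,
    LinearMap.id_apply, hJ, tmul_add, tmul_smul, tmul_neg, smul_neg, hsmul]
  simp only [hI]
  match_scalars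
  · ring
  · linear_combination (b : ℂ) * I_sq

lemma one_tmul_add_I_tmul_mem_eigenspace (a b : ℝ) (v : V) :
    (1 : ℂ) ⊗ₜ[ℝ] v + I ⊗ₜ[ℝ] J v ∈
      Module.End.eigenspace ((a • LinearMap.id + b • J).baseChange ℂ) ((a : ℂ) - b * I) := by
  have h := one_tmul_sub_I_tmul_mem_eigenspace (J := -J) (fun v => by simp [hJ]) a (-b) v
  rwa [neg_smul_neg, LinearMap.neg_apply, tmul_neg, sub_neg_eq_add, ofReal_neg, neg_mul,
    ← sub_eq_add_neg] at h

lemma eigenspace_sup_eigenspace_baseChange_eq_top (a b : ℝ) :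
    Module.End.eigenspace ((a • LinearMap.id + b • J).baseChange ℂ) ((a : ℂ) + b * I) ⊔
      Module.End.eigenspace ((a • LinearMap.id + b • J).baseChange ℂ) ((a : ℂ) - b * I) = ⊤ := by
  rw [eq_top_iff]
  rintro w -
  induction w using TensorProduct.induction_on with
  | zero => exact zero_mem _
  | tmul c v =>
    have hsplit : c ⊗ₜ[ℝ] v = (c / 2) • ((1 : ℂ) ⊗ₜ[ℝ] v - I ⊗ₜ[ℝ] J v) +
        (c / 2) • ((1 : ℂ) ⊗ₜ[ℝ] v + I ⊗ₜ[ℝ] J v) := by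
      rw [← smul_add, sub_add_add_cancel, ← two_smul ℂ, smul_smul, div_mul_cancel₀ c two_ne_zero,
        smul_tmul', smul_eq_mul, mul_one]
    rw [hsplit]
    exact Submodule.add_mem_sup
      (Submodule.smul_mem _ _ (one_tmul_sub_I_tmul_mem_eigenspace hJ a b v))
      (Submodule.smul_mem _ _ (one_tmul_add_I_tmul_mem_eigenspace hJ a b v))
  | add w w' hw hw' => exact add_mem hw hw'

lemma isCDiagonalizable_add_smul (a b : ℝ) : IsCDiagonalizable (a • LinearMap.id + b • J) :=
  eq_top_iff.mpr <| (eigenspace_sup_eigenspace_baseChange_eq_top hJ a b).ge.trans <|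
    sup_le (le_iSup _ _) (le_iSup _ _)

lemma spectrum_baseChange_add_smul [Nontrivial V] [FiniteDimensional ℝ V] (a b : ℝ) :
    spectrum ℂ ((a • LinearMap.id + b • J).baseChange ℂ) =
      {(a : ℂ) + b * I, (a : ℂ) - b * I} := by
  refine (Module.End.spectrum_subset_of_eigenspace_sup_eq_top
    (eigenspace_sup_eigenspace_baseChange_eq_top hJ a b)).antisymm ?_
  obtain ⟨v, hv⟩ := exists_ne (0 : V)
  have hne : (1 : ℂ) ⊗ₜ[ℝ] v - I ⊗ₜ[ℝ] J v ≠ 0 := by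
    simpa only [tmul_neg, ← sub_eq_add_neg] using one_tmul_add_I_tmul_ne_zero hv (-J v)
  rintro μ (rfl | rfl)
  · exact (Module.End.hasEigenvalue_of_hasEigenvector
      ⟨one_tmul_sub_I_tmul_mem_eigenspace hJ a b v, hne⟩).mem_spectrum
  · exact (Module.End.hasEigenvalue_of_hasEigenvector
      ⟨one_tmul_add_I_tmul_mem_eigenspace hJ a b v,
        one_tmul_add_I_tmul_ne_zero hv (J v)⟩).mem_spectrum

end Complexification

theorem statement7
    {V₀ : Type*} [AddCommGroup V₀] [Module ℝ V₀] [FiniteDimensional ℝ V₀] [Nontrivial V₀]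
    (g : LinearMap.BilinForm ℝ V₀)
    (hgsymm : ∀ x y, g x y = g y x)
    (hgpos : ∀ x : V₀, x ≠ 0 → 0 < g x x)
    (A₁ A₂ : V₀ → V₀ → V₀ → V₀ → ℝ) (hA₁ : IsACT A₁) (hA₂ : IsACT A₂)
    (a₁ a₂ : ℝ) (ha₂ : 0 < a₂)
    (hE₁ : IsEinsteinWith g A₁ a₁) (hE₂ : IsEinsteinWith g A₂ a₂)
    (R : (V₀ × V₀) →ₗ[ℝ] (V₀ × V₀) →ₗ[ℝ] (V₀ × V₀) →ₗ[ℝ] (V₀ × V₀))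
    (hR : ∀ p q r s, modelB g (R p q r) s = modelA A₁ A₂ p q r s)
    (ρ : (V₀ × V₀) →ₗ[ℝ] (V₀ × V₀))
    (hρ : ∀ p q, modelB g (ρ p) q = ricciForm R p q) :
    JRComm (modelA A₁ A₂) ρ ∧
    (¬ ∃ c : ℝ, ρ = c • LinearMap.id) ∧
    IsCDiagonalizable ρ ∧
    spectrum ℂ (LinearMap.baseChange ℂ ρ) =
      {((2 * a₁ : ℝ) : ℂ) + ((2 * a₂ : ℝ) : ℂ) * Complex.I,
       ((2 * a₁ : ℝ) : ℂ) - ((2 * a₂ : ℝ) : ℂ) * Complex.I} ∧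
    (∀ x y : V₀, (2 * a₂)⁻¹ • (ρ (x, y) - (2 * a₁) • (x, y)) = (-y, x)) := by
  obtain rfl := ricciOperator_eq hgsymm hgpos hA₁ hA₂ hE₁ hE₂ hR hρ
  have hJ : ∀ p : V₀ × V₀, prodJ V₀ (prodJ V₀ p) = -p := prodJ_prodJ
  refine ⟨jrComm_modelA hA₁ hA₂ _ _, ?_, isCDiagonalizable_add_smul hJ _ _,
    spectrum_baseChange_add_smul hJ _ _, fun x y => ?_⟩
  · rintro ⟨c, hc⟩
    obtain ⟨x, hx⟩ := exists_ne (0 : V₀)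
    have h : (2 * a₂) • x = 0 := by
      simpa using congrArg Prod.snd (LinearMap.congr_fun hc (x, 0))
    exact hx ((smul_eq_zero.mp h).resolve_left (by positivity))
  · rw [LinearMap.add_apply, LinearMap.smul_apply, LinearMap.id_apply, add_sub_cancel_left,
      LinearMap.smul_apply, smul_smul, inv_mul_cancel₀ (by positivity), one_smul, prodJ_apply]
end
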